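/- arXiv:1502.06299 — 2 statements merged into one kernel-verified Lean document; each statement's English description precedes it below -/
import Mathlib

section
/- Cheeger inequality for the discrete magnetic Laplacian: for a finite weighted graph G with signature s : E^{or} → U(1) and vertex measure μ, we have (1/2) λ₁(Δ_μ^s) ≤ h₁^s(μ) ≤ (3/2) √(2 d_μ λ₁(Δ_μ^s)). -/
open Finset

/-- Rayleigh quotient of `f` for the magnetic Laplacian with weights `w`,
vertex measure `μ` and signature `s` (each unordered edge counted once). -/
noncomputable def rayleigh {V : Type*} [Fintype V] (G : SimpleGraph V) [DecidableRel G.Adj]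
    (w : V → V → ℝ) (μ : V → ℝ) (s : V → V → ℂ) (f : V → ℂ) : ℝ :=
  ((1 / 2) * ∑ u : V, ∑ v : V, if G.Adj u v then w u v * ‖f u - s u v * f v‖ ^ 2 else 0) /
    (∑ u : V, ‖f u‖ ^ 2 * μ u)

/-- The first eigenvalue of the magnetic Laplacian, characterized by the
variational (min-max) principle as the infimum of Rayleigh quotients. -/
noncomputable def lam1 {V : Type*} [Fintype V] (G : SimpleGraph V) [DecidableRel G.Adj]
    (w : V → V → ℝ) (μ : V → ℝ) (s : V → V → ℂ) : ℝ :=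
  sInf { x : ℝ | ∃ f : V → ℂ, f ≠ 0 ∧ x = rayleigh G w μ s f }

/-- Frustration index of `V1` with `U(1)`-valued switching functions. -/
noncomputable def frusIdx {V : Type*} [Fintype V] (G : SimpleGraph V) [DecidableRel G.Adj]
    (w : V → V → ℝ) (s : V → V → ℂ) (V1 : Finset V) : ℝ :=
  sInf { x : ℝ | ∃ τ : V → ℂ, (∀ u, ‖τ u‖ = 1) ∧
    x = (1 / 2) * ∑ u ∈ V1, ∑ v ∈ V1, if G.Adj u v then w u v * ‖τ u - s u v * τ v‖ else 0 }

/-- Weighted boundary measure `|E(V1, V1ᶜ)|`. -/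
noncomputable def bdry {V : Type*} [Fintype V] [DecidableEq V] (G : SimpleGraph V)
    [DecidableRel G.Adj] (w : V → V → ℝ) (V1 : Finset V) : ℝ :=
  ∑ u ∈ V1, ∑ v ∈ V1ᶜ, if G.Adj u v then w u v else 0

/-- `μ`-volume of `V1`. -/
noncomputable def vol {V : Type*} [Fintype V] (μ : V → ℝ) (V1 : Finset V) : ℝ :=
  ∑ u ∈ V1, μ u

/-- The Cheeger constant `h₁ˢ(μ)`. -/
noncomputable def cheeger1 {V : Type*} [Fintype V] [DecidableEq V] (G : SimpleGraph V)
    [DecidableRel G.Adj] (w : V → V → ℝ) (μ : V → ℝ) (s : V → V → ℂ) : ℝ :=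
  sInf { x : ℝ | ∃ V1 : Finset V, V1.Nonempty ∧
    x = (frusIdx G w s V1 + bdry G w V1) / vol μ V1 }

/-- Maximal `μ`-degree `d_μ`. -/
noncomputable def dmu {V : Type*} [Fintype V] (G : SimpleGraph V) [DecidableRel G.Adj]
    (w : V → V → ℝ) (μ : V → ℝ) : ℝ :=
  ⨆ u : V, (∑ v : V, if G.Adj u v then w u v else 0) / μ u

open MeasureTheory

/-!
Lower bound: for a switching function `τ` of a set `V1`, the test function `τ · 1_{V1}` has
Rayleigh quotient at most `(2 ι_τ(V1) + |E(V1, V1ᶜ)|) / vol V1`, because an edge inside `V1`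
contributes `‖τ u - s τ v‖² ≤ 2 ‖τ u - s τ v‖` and a boundary edge contributes `1`.

Upper bound (co-area argument): given `f ≠ 0`, use the phase `τ = exp (i arg f)` on the
superlevel sets `{t ≤ |f|²}`, `t ∈ (0, max |f|²)`. Integrating over `t`, the switching cost plus
boundary of these sets is `½ ∑ w (min(|f u|², |f v|²) ‖τ u - s τ v‖ + ||f u|² - |f v|²|)`.
Edgewise this is at most `¾ ∑ w ‖f u - s f v‖ (|f u| + |f v|)`, which Cauchy–Schwarz and
`∑_v w_uv ≤ d_μ μ(u)` bound by `(3/2) √(2 d_μ R(f)) ∑ μ |f|²`, that is, by `(3/2) √(2 d_μ R(f))`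
times the integral of the volumes. So some superlevel set has Cheeger ratio at most
`(3/2) √(2 d_μ R(f))`; finally take the infimum over `f`.
-/

section LayerCake

variable {ι : Type*} [Fintype ι]

lemma intervalIntegrable_indicator_Iic_const (a g x y : ℝ) :
    IntervalIntegrable ({t | t ≤ a}.indicator fun _ => g) volume x y :=
  ⟨(integrableOn_const measure_Ioc_lt_top.ne).indicator measurableSet_Iic,
    (integrableOn_const measure_Ioc_lt_top.ne).indicator measurableSet_Iic⟩

lemma sum_filter_le_eq_sum_indicator (c g : ι → ℝ) (t : ℝ) :
    ∑ i with t ≤ c i, g i = ∑ i, {x | x ≤ c i}.indicator (fun _ => g i) t := by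
  simp [sum_filter, Set.indicator_apply]

lemma intervalIntegrable_sum_filter_le (c g : ι → ℝ) (x y : ℝ) :
    IntervalIntegrable (fun t => ∑ i with t ≤ c i, g i) volume x y := by
  simp_rw [sum_filter_le_eq_sum_indicator, ← Finset.sum_apply]
  exact IntervalIntegrable.sum _ fun i _ => intervalIntegrable_indicator_Iic_const _ _ _ _

lemma integral_sum_filter_le {c : ι → ℝ} {T : ℝ} (hc : ∀ i, c i ∈ Set.Icc 0 T) (g : ι → ℝ) :
    ∫ t in 0..T, ∑ i with t ≤ c i, g i = ∑ i, c i * g i := by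
  simp_rw [sum_filter_le_eq_sum_indicator]
  rw [intervalIntegral.integral_finsetSum fun i _ => intervalIntegrable_indicator_Iic_const _ _ _ _]
  refine sum_congr rfl fun i _ => ?_
  rw [intervalIntegral.integral_indicator (hc i)]
  simp

lemma sum_filter_le_sum_filter_le_eq_sum_filter_min (c : ι → ℝ) (X : ι → ι → ℝ) (t : ℝ) :
    ∑ i with t ≤ c i, ∑ j with t ≤ c j, X i j =
      ∑ p : ι × ι with t ≤ min (c p.1) (c p.2), X p.1 p.2 := by
  simp_rw [le_min_iff]
  rw [← univ_product_univ, filter_product (fun i => t ≤ c i) (fun j => t ≤ c j), sum_product]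

lemma intervalIntegrable_sum_filter_le_sum_filter_le (c : ι → ℝ) (X : ι → ι → ℝ) (x y : ℝ) :
    IntervalIntegrable (fun t => ∑ i with t ≤ c i, ∑ j with t ≤ c j, X i j) volume x y := by
  simp_rw [sum_filter_le_sum_filter_le_eq_sum_filter_min]
  exact intervalIntegrable_sum_filter_le _ _ x y

lemma integral_sum_filter_le_sum_filter_le {c : ι → ℝ} {T : ℝ} (hc : ∀ i, c i ∈ Set.Icc 0 T)
    (X : ι → ι → ℝ) :
    ∫ t in 0..T, ∑ i with t ≤ c i, ∑ j with t ≤ c j, X i j =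
      ∑ i, ∑ j, min (c i) (c j) * X i j := by
  simp_rw [sum_filter_le_sum_filter_le_eq_sum_filter_min]
  exact (integral_sum_filter_le (c := fun p : ι × ι => min (c p.1) (c p.2))
    (fun p => ⟨le_min (hc p.1).1 (hc p.2).1, (min_le_left _ _).trans (hc p.1).2⟩)
    (fun p => X p.1 p.2)).trans (Fintype.sum_prod_type _)

lemma exists_le_of_integral_le {A B : ℝ → ℝ} {T : ℝ} (hT : 0 < T)
    (hA : IntervalIntegrable A volume 0 T) (hB : IntervalIntegrable B volume 0 T)
    (h : ∫ t in 0..T, A t ≤ ∫ t in 0..T, B t) : ∃ t ∈ Set.Ioo 0 T, A t ≤ B t := by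
  by_contra! hlt
  have := intervalIntegral.intervalIntegral_pos_of_pos_on (hA.sub hB)
    (fun t ht => sub_pos.2 (hlt t ht)) hT
  rw [intervalIntegral.integral_sub hA hB] at this
  linarith

end LayerCake

section Polar

variable {E : Type*} [NormedAddCommGroup E] [InnerProductSpace ℝ E]

lemma mul_norm_sub_le_norm_smul_sub_smul {α β : E} (hα : ‖α‖ = 1) (hβ : ‖β‖ = 1)
    {r t : ℝ} (hr : 0 ≤ r) (hrt : r ≤ t) : r * ‖α - β‖ ≤ ‖r • α - t • β‖ := by
  have hinner : inner ℝ α β ≤ 1 := (real_inner_le_norm α β).trans (by rw [hα, hβ, one_mul])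
  -- `‖r • α - t • β‖² - (r ‖α - β‖)² = (t - r)² + 2 r (t - r) (1 - ⟪α, β⟫)`
  rw [← pow_le_pow_iff_left₀ (by positivity) (norm_nonneg _) two_ne_zero, mul_pow,
    norm_sub_sq_real, norm_sub_sq_real, norm_smul, norm_smul, real_inner_smul_left,
    real_inner_smul_right, hα, hβ, Real.norm_of_nonneg hr, Real.norm_of_nonneg (hr.trans hrt)]
  nlinarith [mul_nonneg (mul_nonneg hr (sub_nonneg.2 hrt)) (sub_nonneg.2 hinner)]

lemma min_sq_mul_norm_sub_add_abs_le_of_le {a b α β : E} (hα : ‖α‖ = 1) (hβ : ‖β‖ = 1)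
    (ha : ‖a‖ • α = a) (hb : ‖b‖ • β = b) (hab : ‖a‖ ≤ ‖b‖) :
    min (‖a‖ ^ 2) (‖b‖ ^ 2) * ‖α - β‖ + |‖a‖ ^ 2 - ‖b‖ ^ 2| ≤
      3 / 2 * (‖a - b‖ * (‖a‖ + ‖b‖)) := by
  have hpolar : ‖a‖ * ‖α - β‖ ≤ ‖a - b‖ := by
    simpa only [ha, hb] using mul_norm_sub_le_norm_smul_sub_smul hα hβ (norm_nonneg a) hab
  have hnorm : ‖b‖ - ‖a‖ ≤ ‖a - b‖ := by
    simpa only [norm_sub_rev a b] using norm_sub_norm_le b a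
  rw [min_eq_left (by gcongr), abs_of_nonpos (by nlinarith [norm_nonneg a])]
  -- the left side is at most `‖a - b‖ (2 ‖a‖ + ‖b‖)`, and `2 ‖a‖ + ‖b‖ ≤ 3/2 (‖a‖ + ‖b‖)`
  nlinarith [norm_nonneg a, norm_nonneg (α - β), norm_nonneg (a - b)]

lemma min_sq_mul_norm_sub_add_abs_le {a b α β : E} (hα : ‖α‖ = 1) (hβ : ‖β‖ = 1)
    (ha : ‖a‖ • α = a) (hb : ‖b‖ • β = b) :
    min (‖a‖ ^ 2) (‖b‖ ^ 2) * ‖α - β‖ + |‖a‖ ^ 2 - ‖b‖ ^ 2| ≤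
      3 / 2 * (‖a - b‖ * (‖a‖ + ‖b‖)) := by
  rcases le_total ‖a‖ ‖b‖ with hab | hba
  · exact min_sq_mul_norm_sub_add_abs_le_of_le hα hβ ha hb hab
  · simpa only [norm_sub_rev, min_comm, abs_sub_comm, add_comm ‖b‖] using
      min_sq_mul_norm_sub_add_abs_le_of_le hβ hα hb ha hba

end Polar

lemma min_sq_mul_norm_exp_arg_sub_add_abs_le (a b σ : ℂ) (hσ : ‖σ‖ = 1) :
    min (‖a‖ ^ 2) (‖b‖ ^ 2) *
        ‖Complex.exp (a.arg * Complex.I) - σ * Complex.exp (b.arg * Complex.I)‖ +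
      |‖a‖ ^ 2 - ‖b‖ ^ 2| ≤ 3 / 2 * (‖a - σ * b‖ * (‖a‖ + ‖b‖)) := by
  have hσb : ‖σ * b‖ = ‖b‖ := by rw [norm_mul, hσ, one_mul]
  simpa only [hσb] using min_sq_mul_norm_sub_add_abs_le (a := a) (b := σ * b)
    (Complex.norm_exp_ofReal_mul_I _)
    (by rw [norm_mul, hσ, Complex.norm_exp_ofReal_mul_I, one_mul])
    (by rw [Complex.real_smul, Complex.norm_mul_exp_arg_mul_I])
    (by rw [hσb, Complex.real_smul, mul_left_comm, Complex.norm_mul_exp_arg_mul_I])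

namespace SimpleGraph

variable {V : Type*} [Fintype V] (G : SimpleGraph V) [DecidableRel G.Adj] (w : V → V → ℝ)

noncomputable def edgeSum (F : V → V → ℝ) : ℝ :=
  ∑ u, ∑ v, if G.Adj u v then w u v * F u v else 0

variable {G w}

lemma edgeSum_add (F H : V → V → ℝ) :
    G.edgeSum w (fun u v => F u v + H u v) = G.edgeSum w F + G.edgeSum w H := by
  simp only [edgeSum, ← sum_add_distrib]
  exact sum_congr rfl fun u _ => sum_congr rfl fun v _ => by split_ifs <;> ring

lemma edgeSum_const_mul (a : ℝ) (F : V → V → ℝ) :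
    G.edgeSum w (fun u v => a * F u v) = a * G.edgeSum w F := by
  simp only [edgeSum, mul_sum]
  exact sum_congr rfl fun u _ => sum_congr rfl fun v _ => by split_ifs <;> ring

lemma edgeSum_mono (hw : ∀ u v, G.Adj u v → 0 ≤ w u v) {F H : V → V → ℝ}
    (hFH : ∀ u v, G.Adj u v → F u v ≤ H u v) : G.edgeSum w F ≤ G.edgeSum w H :=
  sum_le_sum fun u _ => sum_le_sum fun v _ => by
    split_ifs with h
    · exact mul_le_mul_of_nonneg_left (hFH u v h) (hw u v h)
    · rfl

lemma edgeSum_nonneg (hw : ∀ u v, G.Adj u v → 0 ≤ w u v) {F : V → V → ℝ}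
    (hF : ∀ u v, G.Adj u v → 0 ≤ F u v) : 0 ≤ G.edgeSum w F := by
  simpa [edgeSum] using edgeSum_mono (G := G) hw (F := 0) hF

lemma edgeSum_swap (hw : ∀ u v, w u v = w v u) (F : V → V → ℝ) :
    G.edgeSum w (fun u v => F v u) = G.edgeSum w F := by
  rw [edgeSum, sum_comm]
  refine sum_congr rfl fun u _ => sum_congr rfl fun v _ => ?_
  simp only [G.adj_comm v u, hw v u]

lemma edgeSum_sub_min (hw_sym : ∀ u v, w u v = w v u) (c : V → ℝ) :
    G.edgeSum w (fun u v => c u - min (c u) (c v)) =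
      1 / 2 * G.edgeSum w (fun u v => |c u - c v|) := by
  have hswap : G.edgeSum w (fun u v => c v - min (c u) (c v)) =
      G.edgeSum w (fun u v => c u - min (c u) (c v)) := by
    rw [← G.edgeSum_swap hw_sym]
    congr 1; ext u v; rw [min_comm]
  have hsum : G.edgeSum w (fun u v => (c u - min (c u) (c v)) + (c v - min (c u) (c v))) =
      G.edgeSum w (fun u v => |c u - c v|) := by
    congr 1; ext u v; linarith [min_add_max (c u) (c v), max_sub_min_eq_abs' (c u) (c v)]
  rw [G.edgeSum_add, hswap] at hsum
  linarith

lemma edgeSum_ite_mem [DecidableEq V] (S T : Finset V) (F : V → V → ℝ) :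
    G.edgeSum w (fun u v => if u ∈ S ∧ v ∈ T then F u v else 0) =
      ∑ u ∈ S, ∑ v ∈ T, if G.Adj u v then w u v * F u v else 0 := by
  calc _ = ∑ u, if u ∈ S then ∑ v, (if v ∈ T then
        (if G.Adj u v then w u v * F u v else 0) else 0) else 0 := by
        refine sum_congr rfl fun u _ => ?_
        by_cases hu : u ∈ S
        · simp only [hu, true_and, if_true]
          exact sum_congr rfl fun v _ => by split_ifs <;> simp
        · simp [hu]
    _ = _ := by simp only [sum_ite_mem, univ_inter]

lemma edgeSum_mul_le_sqrt_mul_sqrt (hw : ∀ u v, G.Adj u v → 0 ≤ w u v) (F H : V → V → ℝ) :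
    G.edgeSum w (fun u v => F u v * H u v) ≤
      √(G.edgeSum w fun u v => F u v ^ 2) * √(G.edgeSum w fun u v => H u v ^ 2) := by
  have hsq (K : V → V → ℝ) (u v : V) :
      (if G.Adj u v then √(w u v) * K u v else 0) ^ 2 =
        if G.Adj u v then w u v * K u v ^ 2 else 0 := by
    split_ifs with h
    · rw [mul_pow, Real.sq_sqrt (hw u v h)]
    · exact zero_pow two_ne_zero
  have hmul (u v : V) :
      (if G.Adj u v then √(w u v) * F u v else 0) * (if G.Adj u v then √(w u v) * H u v else 0) =
        if G.Adj u v then w u v * (F u v * H u v) else 0 := by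
    split_ifs with h
    · rw [mul_mul_mul_comm, Real.mul_self_sqrt (hw u v h)]
    · exact zero_mul 0
  simpa only [edgeSum, Fintype.sum_prod_type, hsq, hmul] using Real.sum_mul_le_sqrt_mul_sqrt univ
    (fun p : V × V => if G.Adj p.1 p.2 then √(w p.1 p.2) * F p.1 p.2 else 0)
    (fun p : V × V => if G.Adj p.1 p.2 then √(w p.1 p.2) * H p.1 p.2 else 0)

variable {μ : V → ℝ}

lemma sum_adj_le_dmu_mul (hμ : ∀ u, 0 < μ u) (u : V) :
    ∑ v, (if G.Adj u v then w u v else 0) ≤ dmu G w μ * μ u :=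
  (div_le_iff₀ (hμ u)).1 <| le_ciSup (f := fun u => (∑ v, if G.Adj u v then w u v else 0) / μ u)
    (Set.finite_range _).bddAbove u

lemma edgeSum_le_dmu_mul (hμ : ∀ u, 0 < μ u) {g : V → ℝ} (hg : ∀ u, 0 ≤ g u) :
    G.edgeSum w (fun u _ => g u) ≤ dmu G w μ * ∑ u, g u * μ u := by
  rw [mul_sum]
  refine sum_le_sum fun u _ => ?_
  calc ∑ v, (if G.Adj u v then w u v * g u else 0)
      = g u * ∑ v, (if G.Adj u v then w u v else 0) := by
        rw [mul_sum]; exact sum_congr rfl fun v _ => by split_ifs <;> ring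
    _ ≤ g u * (dmu G w μ * μ u) := mul_le_mul_of_nonneg_left (sum_adj_le_dmu_mul hμ u) (hg u)
    _ = dmu G w μ * (g u * μ u) := by ring

lemma edgeSum_add_sq_le (hw_sym : ∀ u v, w u v = w v u) (hw : ∀ u v, G.Adj u v → 0 ≤ w u v)
    (hμ : ∀ u, 0 < μ u) (a : V → ℝ) :
    G.edgeSum w (fun u v => (a u + a v) ^ 2) ≤ 4 * dmu G w μ * ∑ u, a u ^ 2 * μ u := by
  calc _ ≤ G.edgeSum w (fun u v => 2 * a u ^ 2 + 2 * a v ^ 2) :=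
        G.edgeSum_mono hw fun u v _ => by nlinarith [sq_nonneg (a u - a v)]
    _ = 4 * G.edgeSum w (fun u _ => a u ^ 2) := by
        rw [G.edgeSum_add, G.edgeSum_const_mul, G.edgeSum_const_mul,
          G.edgeSum_swap hw_sym (fun u (_ : V) => a u ^ 2)]
        ring
    _ ≤ 4 * (dmu G w μ * ∑ u, a u ^ 2 * μ u) := by
        gcongr; exact G.edgeSum_le_dmu_mul hμ fun u => sq_nonneg _
    _ = _ := by ring

end SimpleGraph

section Cheeger

variable {V : Type*} {G : SimpleGraph V} [DecidableRel G.Adj]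
  {w : V → V → ℝ} {μ : V → ℝ} {s : V → V → ℂ}

variable (G w s) in
noncomputable def switchingCost (τ : V → ℂ) (S : Finset V) : ℝ :=
  (1 / 2) * ∑ u ∈ S, ∑ v ∈ S, if G.Adj u v then w u v * ‖τ u - s u v * τ v‖ else 0

lemma switchingCost_nonneg (hw : ∀ u v, G.Adj u v → 0 ≤ w u v) (τ : V → ℂ) (S : Finset V) :
    0 ≤ switchingCost G w s τ S :=
  mul_nonneg (by norm_num) <| sum_nonneg fun u _ => sum_nonneg fun v _ => by
    split_ifs with h
    · exact mul_nonneg (hw u v h) (norm_nonneg _)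
    · rfl

variable [Fintype V]

lemma frusIdx_le_switchingCost (hw : ∀ u v, G.Adj u v → 0 ≤ w u v) {τ : V → ℂ}
    (hτ : ∀ u, ‖τ u‖ = 1) (S : Finset V) : frusIdx G w s S ≤ switchingCost G w s τ S :=
  csInf_le ⟨0, by rintro _ ⟨τ', -, rfl⟩; exact switchingCost_nonneg hw τ' S⟩ ⟨τ, hτ, rfl⟩

lemma le_frusIdx {a : ℝ} {S : Finset V}
    (h : ∀ τ : V → ℂ, (∀ u, ‖τ u‖ = 1) → a ≤ switchingCost G w s τ S) : a ≤ frusIdx G w s S :=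
  le_csInf ⟨_, fun _ => 1, fun _ => norm_one, rfl⟩ (by rintro _ ⟨τ, hτ, rfl⟩; exact h τ hτ)

lemma frusIdx_nonneg (hw : ∀ u v, G.Adj u v → 0 ≤ w u v) (S : Finset V) :
    0 ≤ frusIdx G w s S :=
  le_frusIdx fun τ _ => switchingCost_nonneg hw τ S

lemma vol_pos (hμ : ∀ u, 0 < μ u) {S : Finset V} (hS : S.Nonempty) : 0 < vol μ S :=
  sum_pos (fun u _ => hμ u) hS

lemma rayleigh_nonneg (hw : ∀ u v, G.Adj u v → 0 ≤ w u v) (hμ : ∀ u, 0 ≤ μ u) (f : V → ℂ) :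
    0 ≤ rayleigh G w μ s f :=
  div_nonneg (mul_nonneg (by norm_num) (G.edgeSum_nonneg hw fun _ _ _ => by positivity))
    (sum_nonneg fun u _ => mul_nonneg (by positivity) (hμ u))

lemma dmu_nonneg (hw : ∀ u v, G.Adj u v → 0 ≤ w u v) (hμ : ∀ u, 0 ≤ μ u) : 0 ≤ dmu G w μ :=
  Real.iSup_nonneg fun u => div_nonneg (sum_nonneg fun v _ => by
    split_ifs with h
    · exact hw u v h
    · rfl) (hμ u)

lemma lam1_le_rayleigh (hw : ∀ u v, G.Adj u v → 0 ≤ w u v) (hμ : ∀ u, 0 ≤ μ u) {f : V → ℂ}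
    (hf : f ≠ 0) : lam1 G w μ s ≤ rayleigh G w μ s f :=
  csInf_le ⟨0, by rintro _ ⟨g, -, rfl⟩; exact rayleigh_nonneg hw hμ g⟩ ⟨f, hf, rfl⟩

lemma edgeSum_norm_sub_mul_norm_add_le (hw_sym : ∀ u v, w u v = w v u)
    (hw : ∀ u v, G.Adj u v → 0 ≤ w u v) (hμ : ∀ u, 0 < μ u) {f : V → ℂ} (hf : f ≠ 0) :
    G.edgeSum w (fun u v => ‖f u - s u v * f v‖ * (‖f u‖ + ‖f v‖)) ≤
      2 * √(2 * dmu G w μ * rayleigh G w μ s f) * ∑ u, ‖f u‖ ^ 2 * μ u := by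
  set D := ∑ u, ‖f u‖ ^ 2 * μ u
  set r := rayleigh G w μ s f
  have hD : 0 < D := by
    obtain ⟨u₀, hu₀⟩ := Function.ne_iff.1 hf
    exact sum_pos' (fun u _ => mul_nonneg (sq_nonneg _) (hμ u).le)
      ⟨u₀, mem_univ u₀, mul_pos (pow_pos (norm_pos_iff.2 hu₀) 2) (hμ u₀)⟩
  have hd : 0 ≤ dmu G w μ := dmu_nonneg hw fun u => (hμ u).le
  have hr : 0 ≤ r := rayleigh_nonneg hw (fun u => (hμ u).le) f
  have hnum : G.edgeSum w (fun u v => ‖f u - s u v * f v‖ ^ 2) = 2 * r * D := by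
    have hr_def : r = 1 / 2 * G.edgeSum w (fun u v => ‖f u - s u v * f v‖ ^ 2) / D := rfl
    rw [hr_def]
    field_simp
  calc _ ≤ √(2 * r * D) * √(4 * dmu G w μ * D) :=
        (G.edgeSum_mul_le_sqrt_mul_sqrt hw _ _).trans <| by
          rw [hnum]; gcongr; exact G.edgeSum_add_sq_le hw_sym hw hμ (‖f ·‖)
    _ = √((2 * D) ^ 2 * (2 * dmu G w μ * r)) := by
        rw [← Real.sqrt_mul (by positivity)]; congr 1; ring
    _ = _ := by rw [Real.sqrt_mul (sq_nonneg _), Real.sqrt_sq (by positivity)]; ring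

section Superlevel

variable {c : V → ℝ} {T : ℝ}

lemma integral_switchingCost_superlevel (hc : ∀ u, c u ∈ Set.Icc 0 T) (τ : V → ℂ) :
    ∫ t in 0..T, switchingCost G w s τ {u | t ≤ c u} =
      1 / 2 * G.edgeSum w (fun u v => min (c u) (c v) * ‖τ u - s u v * τ v‖) := by
  simp only [switchingCost]
  rw [intervalIntegral.integral_const_mul, integral_sum_filter_le_sum_filter_le hc]
  congr 1
  exact sum_congr rfl fun u _ => sum_congr rfl fun v _ => by split_ifs <;> ring

variable (c T) in
lemma intervalIntegrable_switchingCost_superlevel (τ : V → ℂ) :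
    IntervalIntegrable (fun t => switchingCost G w s τ {u | t ≤ c u}) volume 0 T :=
  (intervalIntegrable_sum_filter_le_sum_filter_le _ _ _ _).const_mul _

end Superlevel

variable [DecidableEq V]

lemma bdry_nonneg (hw : ∀ u v, G.Adj u v → 0 ≤ w u v) (S : Finset V) : 0 ≤ bdry G w S :=
  sum_nonneg fun u _ => sum_nonneg fun v _ => by
    split_ifs with h
    · exact hw u v h
    · rfl

lemma bdry_eq_edgeSum (S : Finset V) :
    bdry G w S = G.edgeSum w fun u v => if u ∈ S ∧ v ∈ Sᶜ then 1 else 0 := by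
  simp only [G.edgeSum_ite_mem, mul_one, bdry]

lemma bdry_eq_sub (S : Finset V) :
    bdry G w S = ∑ u ∈ S, ∑ v, (if G.Adj u v then w u v else 0) -
      ∑ u ∈ S, ∑ v ∈ S, (if G.Adj u v then w u v else 0) := by
  rw [eq_sub_iff_add_eq, bdry, ← sum_add_distrib]
  exact sum_congr rfl fun u _ => sum_compl_add_sum S _

lemma norm_ite_sub_mul_ite_sq_le {S : Finset V} {τ : V → ℂ} (hτ : ∀ u, ‖τ u‖ = 1)
    {σ : ℂ} (hσ : ‖σ‖ = 1) (u v : V) :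
    ‖(if u ∈ S then τ u else 0) - σ * (if v ∈ S then τ v else 0)‖ ^ 2 ≤
      2 * (if u ∈ S ∧ v ∈ S then ‖τ u - σ * τ v‖ else 0) +
        ((if u ∈ S ∧ v ∈ Sᶜ then 1 else 0) + (if v ∈ S ∧ u ∈ Sᶜ then 1 else 0)) := by
  have hστ : ‖σ * τ v‖ = 1 := by rw [norm_mul, hσ, hτ v, one_mul]
  by_cases hu : u ∈ S <;> by_cases hv : v ∈ S <;> simp [hu, hv, hτ, hσ]
  have h2 : ‖τ u - σ * τ v‖ ≤ 2 := (norm_sub_le _ _).trans (by rw [hτ u, hστ]; norm_num)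
  nlinarith [norm_nonneg (τ u - σ * τ v)]

lemma lam1_mul_vol_le (hw_sym : ∀ u v, w u v = w v u) (hw : ∀ u v, G.Adj u v → 0 ≤ w u v)
    (hμ : ∀ u, 0 < μ u) (hs_unit : ∀ u v, G.Adj u v → ‖s u v‖ = 1) {S : Finset V}
    (hS : S.Nonempty) {τ : V → ℂ} (hτ : ∀ u, ‖τ u‖ = 1) :
    lam1 G w μ s * vol μ S ≤ 2 * switchingCost G w s τ S + bdry G w S := by
  set f : V → ℂ := fun u => if u ∈ S then τ u else 0
  have hf : f ≠ 0 := by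
    obtain ⟨u₀, hu₀⟩ := hS
    exact Function.ne_iff.2 ⟨u₀, by simp [f, hu₀, ← norm_ne_zero_iff, hτ]⟩
  have hden : ∑ u, ‖f u‖ ^ 2 * μ u = vol μ S := by
    simp [f, apply_ite, hτ, vol]
  have hnum : G.edgeSum w (fun u v => ‖f u - s u v * f v‖ ^ 2) ≤
      2 * (2 * switchingCost G w s τ S) + 2 * bdry G w S := by
    calc _ ≤ G.edgeSum w fun u v => 2 * (if u ∈ S ∧ v ∈ S then ‖τ u - s u v * τ v‖ else 0) +
          ((if u ∈ S ∧ v ∈ Sᶜ then 1 else 0) + (if v ∈ S ∧ u ∈ Sᶜ then 1 else 0)) :=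
          G.edgeSum_mono hw fun u v h => norm_ite_sub_mul_ite_sq_le hτ (hs_unit u v h) u v
      _ = _ := by
        rw [G.edgeSum_add, G.edgeSum_add, G.edgeSum_const_mul,
          G.edgeSum_swap hw_sym (fun u v => if u ∈ S ∧ v ∈ Sᶜ then (1 : ℝ) else 0),
          G.edgeSum_ite_mem, ← bdry_eq_edgeSum, switchingCost]
        ring
  have hray : rayleigh G w μ s f = 1 / 2 * G.edgeSum w (fun u v => ‖f u - s u v * f v‖ ^ 2) /
      vol μ S := by rw [← hden]; rfl
  have := lam1_le_rayleigh hw (fun u => (hμ u).le) (s := s) hf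
  rw [hray, le_div_iff₀ (vol_pos hμ hS)] at this
  linarith [bdry_nonneg hw S]

lemma half_lam1_le_cheeger1 [Nonempty V] (hw_sym : ∀ u v, w u v = w v u)
    (hw : ∀ u v, G.Adj u v → 0 ≤ w u v) (hμ : ∀ u, 0 < μ u)
    (hs_unit : ∀ u v, G.Adj u v → ‖s u v‖ = 1) : 1 / 2 * lam1 G w μ s ≤ cheeger1 G w μ s := by
  refine le_csInf ⟨_, univ, univ_nonempty, rfl⟩ ?_
  rintro _ ⟨S, hS, rfl⟩
  rw [le_div_iff₀ (vol_pos hμ hS)]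
  have : 1 / 2 * lam1 G w μ s * vol μ S - bdry G w S ≤ frusIdx G w s S :=
    le_frusIdx fun τ hτ => by
      linarith [lam1_mul_vol_le hw_sym hw hμ hs_unit hS hτ, bdry_nonneg hw S]
  linarith

section Superlevel

variable {c : V → ℝ} {T : ℝ}

lemma integral_bdry_superlevel (hc : ∀ u, c u ∈ Set.Icc 0 T) :
    ∫ t in 0..T, bdry G w {u | t ≤ c u} =
      G.edgeSum w (fun u v => c u - min (c u) (c v)) := by
  simp only [bdry_eq_sub]
  rw [intervalIntegral.integral_sub (intervalIntegrable_sum_filter_le _ _ _ _)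
    (intervalIntegrable_sum_filter_le_sum_filter_le _ _ _ _), integral_sum_filter_le hc,
    integral_sum_filter_le_sum_filter_le hc, SimpleGraph.edgeSum, ← sum_sub_distrib]
  refine sum_congr rfl fun u _ => ?_
  rw [mul_sum, ← sum_sub_distrib]
  exact sum_congr rfl fun v _ => by split_ifs <;> ring

variable (c T) in
lemma intervalIntegrable_bdry_superlevel :
    IntervalIntegrable (fun t => bdry G w {u | t ≤ c u}) volume 0 T := by
  simp only [bdry_eq_sub]
  exact (intervalIntegrable_sum_filter_le _ _ _ _).sub
    (intervalIntegrable_sum_filter_le_sum_filter_le _ _ _ _)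

end Superlevel

lemma integral_switchingCost_add_bdry_superlevel_le (hw_sym : ∀ u v, w u v = w v u)
    (hw : ∀ u v, G.Adj u v → 0 ≤ w u v) (hs_unit : ∀ u v, G.Adj u v → ‖s u v‖ = 1)
    (f : V → ℂ) {T : ℝ} (hT : ∀ u, ‖f u‖ ^ 2 ≤ T) :
    ∫ t in 0..T, (switchingCost G w s (fun u => Complex.exp ((f u).arg * Complex.I))
        {u | t ≤ ‖f u‖ ^ 2} + bdry G w {u | t ≤ ‖f u‖ ^ 2}) ≤
      3 / 4 * G.edgeSum w (fun u v => ‖f u - s u v * f v‖ * (‖f u‖ + ‖f v‖)) := by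
  have hc : ∀ u, ‖f u‖ ^ 2 ∈ Set.Icc 0 T := fun u => ⟨sq_nonneg _, hT u⟩
  rw [intervalIntegral.integral_add, integral_switchingCost_superlevel hc,
    integral_bdry_superlevel hc, G.edgeSum_sub_min hw_sym, ← mul_add, ← G.edgeSum_add]
  · calc _ ≤ 1 / 2 * G.edgeSum w (fun u v => 3 / 2 * (‖f u - s u v * f v‖ * (‖f u‖ + ‖f v‖))) :=
          mul_le_mul_of_nonneg_left (G.edgeSum_mono hw fun u v h =>
            min_sq_mul_norm_exp_arg_sub_add_abs_le _ _ _ (hs_unit u v h)) (by norm_num)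
      _ = _ := by rw [G.edgeSum_const_mul]; ring
  · exact intervalIntegrable_switchingCost_superlevel _ _ _
  · exact intervalIntegrable_bdry_superlevel _ _

lemma exists_cheeger_ratio_le (hw_sym : ∀ u v, w u v = w v u)
    (hw : ∀ u v, G.Adj u v → 0 ≤ w u v) (hμ : ∀ u, 0 < μ u)
    (hs_unit : ∀ u v, G.Adj u v → ‖s u v‖ = 1) {f : V → ℂ} (hf : f ≠ 0) :
    ∃ S : Finset V, S.Nonempty ∧ frusIdx G w s S + bdry G w S ≤
      3 / 2 * √(2 * dmu G w μ * rayleigh G w μ s f) * vol μ S := by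
  obtain ⟨u₀, hu₀⟩ := Function.ne_iff.1 hf
  obtain ⟨u₁, -, hmax⟩ := exists_max_image univ (fun u => ‖f u‖ ^ 2) ⟨u₀, mem_univ u₀⟩
  set T := ‖f u₁‖ ^ 2
  have hT : 0 < T := (pow_pos (norm_pos_iff.2 hu₀) 2).trans_le (hmax u₀ (mem_univ u₀))
  have hc : ∀ u, ‖f u‖ ^ 2 ∈ Set.Icc 0 T := fun u => ⟨sq_nonneg _, hmax u (mem_univ u)⟩
  set K := 3 / 2 * √(2 * dmu G w μ * rayleigh G w μ s f)
  set τ : V → ℂ := fun u => Complex.exp ((f u).arg * Complex.I)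
  have hint : ∫ t in 0..T, (switchingCost G w s τ {u | t ≤ ‖f u‖ ^ 2} +
      bdry G w {u | t ≤ ‖f u‖ ^ 2}) ≤ ∫ t in 0..T, K * vol μ {u | t ≤ ‖f u‖ ^ 2} := by
    simp only [vol]
    rw [intervalIntegral.integral_const_mul, integral_sum_filter_le hc]
    calc _ ≤ 3 / 4 * G.edgeSum w (fun u v => ‖f u - s u v * f v‖ * (‖f u‖ + ‖f v‖)) :=
          integral_switchingCost_add_bdry_superlevel_le hw_sym hw hs_unit f fun u => (hc u).2
      _ ≤ 3 / 4 * (2 * √(2 * dmu G w μ * rayleigh G w μ s f) * ∑ u, ‖f u‖ ^ 2 * μ u) := by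
          gcongr; exact edgeSum_norm_sub_mul_norm_add_le hw_sym hw hμ hf
      _ = _ := by ring
  obtain ⟨t, ht, hle⟩ := exists_le_of_integral_le hT
    ((intervalIntegrable_switchingCost_superlevel _ _ _).add
      (intervalIntegrable_bdry_superlevel _ _))
    ((intervalIntegrable_sum_filter_le _ _ _ _).const_mul K) hint
  refine ⟨({u | t ≤ ‖f u‖ ^ 2} : Finset V), ⟨u₁, by simpa using ht.2.le⟩, ?_⟩
  have hτ : ∀ u, ‖τ u‖ = 1 := fun u => Complex.norm_exp_ofReal_mul_I _
  exact (add_le_add_left (frusIdx_le_switchingCost hw hτ _) _).trans hle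

lemma cheeger1_le_of_ne_zero (hw_sym : ∀ u v, w u v = w v u)
    (hw : ∀ u v, G.Adj u v → 0 ≤ w u v) (hμ : ∀ u, 0 < μ u)
    (hs_unit : ∀ u v, G.Adj u v → ‖s u v‖ = 1) {f : V → ℂ} (hf : f ≠ 0) :
    cheeger1 G w μ s ≤ 3 / 2 * √(2 * dmu G w μ * rayleigh G w μ s f) := by
  obtain ⟨S, hS, hle⟩ := exists_cheeger_ratio_le hw_sym hw hμ hs_unit hf
  have hbdd : BddBelow {x | ∃ S : Finset V, S.Nonempty ∧
      x = (frusIdx G w s S + bdry G w S) / vol μ S} := by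
    refine ⟨0, ?_⟩
    rintro _ ⟨S, hS, rfl⟩
    exact div_nonneg (add_nonneg (frusIdx_nonneg hw S) (bdry_nonneg hw S)) (vol_pos hμ hS).le
  exact (csInf_le hbdd ⟨S, hS, rfl⟩).trans ((div_le_iff₀ (vol_pos hμ hS)).2 hle)

lemma cheeger1_le_sqrt_lam1 [Nonempty V] (hw_sym : ∀ u v, w u v = w v u)
    (hw : ∀ u v, G.Adj u v → 0 ≤ w u v) (hμ : ∀ u, 0 < μ u)
    (hs_unit : ∀ u v, G.Adj u v → ‖s u v‖ = 1) :
    cheeger1 G w μ s ≤ 3 / 2 * √(2 * dmu G w μ * lam1 G w μ s) := by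
  set g : ℝ → ℝ := fun x => 3 / 2 * √(2 * dmu G w μ * x)
  have hmono : Monotone g := fun x y hxy => by
    have := dmu_nonneg hw fun u => (hμ u).le
    simp only [g]
    gcongr
  have hne : {x | ∃ f : V → ℂ, f ≠ 0 ∧ x = rayleigh G w μ s f}.Nonempty :=
    ⟨_, 1, one_ne_zero, rfl⟩
  have hbdd : BddBelow {x | ∃ f : V → ℂ, f ≠ 0 ∧ x = rayleigh G w μ s f} :=
    ⟨0, by rintro _ ⟨f, -, rfl⟩; exact rayleigh_nonneg hw (fun u => (hμ u).le) f⟩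
  change cheeger1 G w μ s ≤ g (lam1 G w μ s)
  rw [lam1, hmono.map_csInf_of_continuousAt (by fun_prop) hne hbdd]
  refine le_csInf (hne.image g) ?_
  rintro _ ⟨_, ⟨f, hf, rfl⟩, rfl⟩
  exact cheeger1_le_of_ne_zero hw_sym hw hμ hs_unit hf

end Cheeger

theorem stmt_10_general {V : Type*} [Fintype V] [DecidableEq V] (G : SimpleGraph V) [DecidableRel G.Adj]
    (w : V → V → ℝ) (μ : V → ℝ) (s : V → V → ℂ)
    (hw_sym : ∀ u v, w u v = w v u)
    (hw_pos : ∀ u v, G.Adj u v → 0 < w u v)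
    (hμ : ∀ u, 0 < μ u)
    (hs_unit : ∀ u v, G.Adj u v → ‖s u v‖ = 1) :
    (1 / 2) * lam1 G w μ s ≤ cheeger1 G w μ s ∧
      cheeger1 G w μ s ≤ (3 / 2) * Real.sqrt (2 * dmu G w μ * lam1 G w μ s) := by
  have hw : ∀ u v, G.Adj u v → 0 ≤ w u v := fun u v h => (hw_pos u v h).le
  rcases isEmpty_or_nonempty V with hV | hV
  · simp [lam1, cheeger1, dmu, Subsingleton.elim _ (0 : V → ℂ), Finset.eq_empty_of_isEmpty]
  · exact ⟨half_lam1_le_cheeger1 hw_sym hw hμ hs_unit, cheeger1_le_sqrt_lam1 hw_sym hw hμ hs_unit⟩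

theorem stmt_10 {V : Type*} [Fintype V] [DecidableEq V] (G : SimpleGraph V) [DecidableRel G.Adj]
    (w : V → V → ℝ) (μ : V → ℝ) (s : V → V → ℂ)
    (hw_sym : ∀ u v, w u v = w v u)
    (hw_pos : ∀ u v, G.Adj u v → 0 < w u v)
    (hμ : ∀ u, 0 < μ u)
    (hs_unit : ∀ u v, G.Adj u v → ‖s u v‖ = 1)
    (hs_inv : ∀ u v, G.Adj u v → s v u = (s u v)⁻¹) :
    (1 / 2) * lam1 G w μ s ≤ cheeger1 G w μ s ∧
      cheeger1 G w μ s ≤ (3 / 2) * Real.sqrt (2 * dmu G w μ * lam1 G w μ s) :=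
  stmt_10_general G w μ s hw_sym hw_pos hμ hs_unit
end

section
/- Localization lemma: let G be a finite weighted graph with U(1)-signature s, F : V → ℂⁿ any map, and for ε > 0 and S ⊆ V let η(u) = 0 if F(u) = 0 and η(u) = max{0, 1 − d_F(u, S ∩ supp F)/ε} otherwise, where d_F(u,v) = min_{γ∈U(1)} ||F(u)/||F(u)|| − γ F(v)/||F(v)||||. Set Ψ = ηF. Then for every edge {u,v}, ||Ψ(u) − s_{uv}Ψ(v)|| ≤ (1 + 1/ε) ||F(u) − s_{uv}F(v)||. -/
/-!
The phase distance `inf_{|γ| = 1} ‖x - γ y‖` is a pseudometric, so `u ↦ d_F(u, S ∩ supp F)` is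
1-Lipschitz for `d_F` and the cutoff `η` is `1/ε`-Lipschitz on `supp F`. In an inner product
space, shrinking the longer of two vectors to the length of the shorter does not increase their
distance; hence `d_F(u, v) · min ‖F u‖ ‖F v‖ ≤ ‖F u - s F v‖`. Writing
`η_u a - η_v b = η_v (a - b) + (η_u - η_v) a` for `a = F u`, `b = s F v` when `‖a‖ ≤ ‖b‖`
(symmetrically otherwise) bounds the left-hand side by `‖F u - s F v‖ + ‖F u - s F v‖ / ε`.
-/

open scoped Classical

section PhaseDist

variable {E : Type*} [SeminormedAddCommGroup E] [NormedSpace ℂ E]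

noncomputable def phaseDist (x y : E) : ℝ :=
  sInf {r : ℝ | ∃ γ : ℂ, ‖γ‖ = 1 ∧ r = ‖x - γ • y‖}

lemma phaseDist_nonneg (x y : E) : 0 ≤ phaseDist x y :=
  Real.sInf_nonneg <| by rintro r ⟨γ, -, rfl⟩; exact norm_nonneg _

lemma phaseDist_le {x y : E} {γ : ℂ} (hγ : ‖γ‖ = 1) : phaseDist x y ≤ ‖x - γ • y‖ :=
  csInf_le ⟨0, by rintro r ⟨γ, -, rfl⟩; exact norm_nonneg _⟩ ⟨γ, hγ, rfl⟩

lemma le_phaseDist {x y : E} {c : ℝ} (h : ∀ γ : ℂ, ‖γ‖ = 1 → c ≤ ‖x - γ • y‖) :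
    c ≤ phaseDist x y :=
  le_csInf ⟨_, 1, norm_one, rfl⟩ <| by rintro r ⟨γ, hγ, rfl⟩; exact h γ hγ

lemma phaseDist_comm (x y : E) : phaseDist x y = phaseDist y x := by
  suffices ∀ x y : E, phaseDist x y ≤ phaseDist y x from le_antisymm (this x y) (this y x)
  intro x y
  refine le_phaseDist fun γ hγ => ?_
  have hγ₀ : γ ≠ 0 := norm_ne_zero_iff.mp (by rw [hγ]; exact one_ne_zero)
  calc phaseDist x y ≤ ‖x - γ⁻¹ • y‖ := phaseDist_le (by rw [norm_inv, hγ, inv_one])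
    _ = ‖γ • (x - γ⁻¹ • y)‖ := by rw [norm_smul, hγ, one_mul]
    _ = ‖y - γ • x‖ := by rw [smul_sub, smul_inv_smul₀ hγ₀, norm_sub_rev]

lemma phaseDist_triangle (x y z : E) : phaseDist x z ≤ phaseDist x y + phaseDist y z := by
  rw [← sub_le_iff_le_add']
  refine le_phaseDist fun γ₂ hγ₂ => ?_
  rw [sub_le_iff_le_add', ← sub_le_iff_le_add]
  refine le_phaseDist fun γ₁ hγ₁ => ?_
  rw [sub_le_iff_le_add]
  calc phaseDist x z ≤ ‖x - (γ₁ * γ₂) • z‖ := phaseDist_le (by rw [norm_mul, hγ₁, hγ₂, one_mul])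
    _ = ‖(x - γ₁ • y) + γ₁ • (y - γ₂ • z)‖ := by rw [smul_sub, mul_smul]; abel_nf
    _ ≤ ‖x - γ₁ • y‖ + ‖y - γ₂ • z‖ := by grw [norm_add_le, norm_smul, hγ₁, one_mul]

end PhaseDist

section InnerProductSpace

variable {𝕜 E : Type*} [RCLike 𝕜] [NormedAddCommGroup E] [InnerProductSpace 𝕜 E]

lemma norm_sub_smul_le_of_norm_le {a b : E} (hab : ‖a‖ ≤ ‖b‖) (hb : b ≠ 0) :
    ‖a - ((‖a‖ / ‖b‖ : ℝ) : 𝕜) • b‖ ≤ ‖a - b‖ := by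
  have hb₀ : 0 < ‖b‖ := norm_pos_iff.mpr hb
  set t := ‖a‖ / ‖b‖
  have htb : t * ‖b‖ = ‖a‖ := div_mul_cancel₀ _ hb₀.ne'
  have ht₁ : t ≤ 1 := div_le_one_of_le₀ hab hb₀.le
  have hre : RCLike.re (inner 𝕜 a b) ≤ ‖a‖ * ‖b‖ := re_inner_le_norm a b
  rw [← sq_le_sq₀ (norm_nonneg _) (norm_nonneg _), @norm_sub_sq 𝕜, @norm_sub_sq 𝕜,
    inner_smul_right, RCLike.re_ofReal_mul, norm_smul, RCLike.norm_ofReal,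
    abs_of_nonneg (by positivity)]
  nlinarith [mul_le_mul_of_nonneg_left hre (sub_nonneg.mpr ht₁)]

lemma min_norm_mul_norm_sub_le (a b : E) :
    min ‖a‖ ‖b‖ * ‖(‖a‖ : 𝕜)⁻¹ • a - (‖b‖ : 𝕜)⁻¹ • b‖ ≤ ‖a - b‖ := by
  wlog hab : ‖a‖ ≤ ‖b‖ generalizing a b
  · rw [min_comm, norm_sub_rev, norm_sub_rev a]
    exact this b a (le_of_not_ge hab)
  rcases eq_or_ne a 0 with rfl | ha
  · simp
  have hb : b ≠ 0 := norm_pos_iff.mp ((norm_pos_iff.mpr ha).trans_le hab)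
  have ha' : (‖a‖ : 𝕜) ≠ 0 := RCLike.ofReal_ne_zero.mpr (norm_ne_zero_iff.mpr ha)
  have hrescale : (‖a‖ : 𝕜) • ((‖a‖ : 𝕜)⁻¹ • a - (‖b‖ : 𝕜)⁻¹ • b)
      = a - ((‖a‖ / ‖b‖ : ℝ) : 𝕜) • b := by
    rw [smul_sub, smul_inv_smul₀ ha', smul_smul, RCLike.ofReal_div, div_eq_mul_inv]
  calc min ‖a‖ ‖b‖ * ‖(‖a‖ : 𝕜)⁻¹ • a - (‖b‖ : 𝕜)⁻¹ • b‖
      = ‖a - ((‖a‖ / ‖b‖ : ℝ) : 𝕜) • b‖ := by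
        rw [← hrescale, norm_smul, RCLike.norm_ofReal, abs_norm, min_eq_left hab]
    _ ≤ ‖a - b‖ := norm_sub_smul_le_of_norm_le hab hb

end InnerProductSpace

lemma phaseDist_mul_min_norm_le {E : Type*} [NormedAddCommGroup E] [InnerProductSpace ℂ E]
    (x y : E) {s : ℂ} (hs : ‖s‖ = 1) :
    phaseDist ((‖x‖ : ℂ)⁻¹ • x) ((‖y‖ : ℂ)⁻¹ • y) * min ‖x‖ ‖y‖ ≤ ‖x - s • y‖ := by
  have hsy : ‖s • y‖ = ‖y‖ := by rw [norm_smul, hs, one_mul]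
  calc phaseDist ((‖x‖ : ℂ)⁻¹ • x) ((‖y‖ : ℂ)⁻¹ • y) * min ‖x‖ ‖y‖
      ≤ min ‖x‖ ‖s • y‖ * ‖(‖x‖ : ℂ)⁻¹ • x - (‖s • y‖ : ℂ)⁻¹ • (s • y)‖ := by
        rw [mul_comm, hsy, smul_comm]
        gcongr
        exact phaseDist_le hs
    _ ≤ ‖x - s • y‖ := min_norm_mul_norm_sub_le x (s • y)

lemma norm_smul_sub_smul_le {𝕜 E : Type*} [RCLike 𝕜] [SeminormedAddCommGroup E]
    [NormedSpace 𝕜 E] {α β : ℝ} (hα : |α| ≤ 1) (hβ : |β| ≤ 1) (a b : E) :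
    ‖(α : 𝕜) • a - (β : 𝕜) • b‖ ≤ ‖a - b‖ + |α - β| * min ‖a‖ ‖b‖ := by
  wlog hab : ‖a‖ ≤ ‖b‖ generalizing α β a b
  · rw [norm_sub_rev, norm_sub_rev a, abs_sub_comm, min_comm]
    exact this hβ hα b a (le_of_not_ge hab)
  calc ‖(α : 𝕜) • a - (β : 𝕜) • b‖ = ‖(β : 𝕜) • (a - b) + ((α - β : ℝ) : 𝕜) • a‖ := by
        rw [RCLike.ofReal_sub, smul_sub, sub_smul]; abel_nf
    _ ≤ ‖a - b‖ + |α - β| * min ‖a‖ ‖b‖ := by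
        grw [norm_add_le, norm_smul, norm_smul, RCLike.norm_ofReal, RCLike.norm_ofReal, hβ,
          min_eq_left hab, one_mul]

section Cutoff

variable {V : Type*} {d : V → V → ℝ}

lemma sInf_image_le_sInf_image_add (hd₀ : ∀ p q, 0 ≤ d p q)
    (hd : ∀ p q r, d p r ≤ d p q + d q r) (A : Set V) (p q : V) :
    sInf (d p '' A) ≤ sInf (d q '' A) + d p q := by
  rcases A.eq_empty_or_nonempty with rfl | hA
  · simpa using hd₀ p q
  rw [← sub_le_iff_le_add]
  refine le_csInf (hA.image _) ?_
  rintro _ ⟨a, ha, rfl⟩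
  have hbdd : BddBelow (d p '' A) := ⟨0, by rintro _ ⟨b, -, rfl⟩; exact hd₀ p b⟩
  linarith [csInf_le hbdd ⟨a, ha, rfl⟩, hd p q a]

noncomputable def infDistCutoff (d : V → V → ℝ) (A : Set V) (ε : ℝ) (p : V) : ℝ :=
  max 0 (1 - sInf (d p '' A) / ε)

lemma abs_infDistCutoff_le_one (hd₀ : ∀ p q, 0 ≤ d p q) (A : Set V) {ε : ℝ} (hε : 0 ≤ ε)
    (p : V) : |infDistCutoff d A ε p| ≤ 1 := by
  rw [infDistCutoff, abs_of_nonneg (le_max_left _ _)]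
  refine max_le zero_le_one (sub_le_self _ (div_nonneg ?_ hε))
  exact Real.sInf_nonneg (by rintro _ ⟨a, -, rfl⟩; exact hd₀ p a)

lemma abs_infDistCutoff_sub_le (hd₀ : ∀ p q, 0 ≤ d p q)
    (hd : ∀ p q r, d p r ≤ d p q + d q r) (hsymm : ∀ p q, d p q = d q p) (A : Set V)
    {ε : ℝ} (hε : 0 < ε) (p q : V) :
    |infDistCutoff d A ε p - infDistCutoff d A ε q| ≤ d p q / ε := by
  have hp := sInf_image_le_sInf_image_add hd₀ hd A p q
  have hq := sInf_image_le_sInf_image_add hd₀ hd A q p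
  rw [hsymm q p] at hq
  calc |infDistCutoff d A ε p - infDistCutoff d A ε q|
      ≤ |(1 - sInf (d p '' A) / ε) - (1 - sInf (d q '' A) / ε)| := by
        rw [infDistCutoff, infDistCutoff, max_comm 0, max_comm 0]
        exact abs_max_sub_max_le_abs _ _ 0
    _ = |sInf (d q '' A) - sInf (d p '' A)| / ε := by
        rw [← abs_of_pos hε, ← abs_div, abs_of_pos hε]; ring_nf
    _ ≤ d p q / ε := by gcongr; exact abs_sub_le_iff.mpr ⟨by linarith, by linarith⟩

end Cutoff

section PhaseCutoff

variable {V E : Type*} [NormedAddCommGroup E] [InnerProductSpace ℂ E]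

-- the paper's `d_F`
noncomputable def normalizedPhaseDist (F : V → E) (p q : V) : ℝ :=
  phaseDist ((‖F p‖ : ℂ)⁻¹ • F p) ((‖F q‖ : ℂ)⁻¹ • F q)

-- the paper's `η`, for `A = S ∩ supp F`
noncomputable def phaseCutoff (F : V → E) (A : Set V) (ε : ℝ) (p : V) : ℝ :=
  if F p = 0 then 0 else infDistCutoff (normalizedPhaseDist F) A ε p

lemma abs_phaseCutoff_le_one (F : V → E) (A : Set V) {ε : ℝ} (hε : 0 ≤ ε) (p : V) :
    |phaseCutoff F A ε p| ≤ 1 := by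
  unfold phaseCutoff
  split_ifs
  · simp
  · exact abs_infDistCutoff_le_one (fun _ _ => phaseDist_nonneg _ _) A hε p

lemma abs_phaseCutoff_sub_mul_min_le (F : V → E) (A : Set V) {ε : ℝ} (hε : 0 < ε) (u v : V)
    {s : ℂ} (hs : ‖s‖ = 1) :
    |phaseCutoff F A ε u - phaseCutoff F A ε v| * min ‖F u‖ ‖F v‖ ≤ ‖F u - s • F v‖ / ε := by
  by_cases hu : F u = 0
  · simp [hu, div_nonneg (norm_nonneg _) hε.le]
  by_cases hv : F v = 0
  · simp [hv, div_nonneg (norm_nonneg _) hε.le]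
  calc |phaseCutoff F A ε u - phaseCutoff F A ε v| * min ‖F u‖ ‖F v‖
      ≤ normalizedPhaseDist F u v / ε * min ‖F u‖ ‖F v‖ := by
        rw [phaseCutoff, phaseCutoff, if_neg hu, if_neg hv]
        gcongr
        exact abs_infDistCutoff_sub_le (d := normalizedPhaseDist F)
          (fun _ _ => phaseDist_nonneg _ _) (fun _ _ _ => phaseDist_triangle _ _ _)
          (fun _ _ => phaseDist_comm _ _) A hε u v
    _ ≤ ‖F u - s • F v‖ / ε := by
        rw [div_mul_eq_mul_div]
        gcongr
        exact phaseDist_mul_min_norm_le _ _ hs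

end PhaseCutoff

theorem stmt_17_general {V : Type*} {n : ℕ} (G : SimpleGraph V)
    (s : V → V → ℂ) (hs_unit : ∀ u v, G.Adj u v → ‖s u v‖ = 1)
    (F : V → EuclideanSpace ℂ (Fin n))
    (dF : V → V → ℝ)
    (hdF : ∀ u v, dF u v = sInf { x : ℝ | ∃ γ : ℂ, ‖γ‖ = 1 ∧
      x = ‖(‖F u‖ : ℂ)⁻¹ • F u - γ • ((‖F v‖ : ℂ)⁻¹ • F v)‖ })
    (S : Set V) (ε : ℝ) (hε : 0 < ε)
    (η : V → ℝ)
    (hη : ∀ u, η u = if F u = 0 then 0 else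
      max 0 (1 - sInf { x : ℝ | ∃ a, a ∈ S ∧ F a ≠ 0 ∧ x = dF u a } / ε)) :
    ∀ u v, G.Adj u v →
      ‖(η u : ℂ) • F u - s u v • ((η v : ℂ) • F v)‖ ≤
        (1 + 1 / ε) * ‖F u - s u v • F v‖ := by
  intro u v huv
  have hs := hs_unit u v huv
  obtain rfl : dF = normalizedPhaseDist F := funext₂ hdF
  set A := {a | a ∈ S ∧ F a ≠ 0}
  obtain rfl : η = phaseCutoff F A ε := by
    funext w
    rw [hη w, phaseCutoff, infDistCutoff]
    congr
    ext
    simp [A, and_assoc, eq_comm]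
  calc ‖(phaseCutoff F A ε u : ℂ) • F u - s u v • ((phaseCutoff F A ε v : ℂ) • F v)‖
      = ‖(phaseCutoff F A ε u : ℂ) • F u - (phaseCutoff F A ε v : ℂ) • (s u v • F v)‖ := by
        rw [smul_comm]
    _ ≤ ‖F u - s u v • F v‖ +
          |phaseCutoff F A ε u - phaseCutoff F A ε v| * min ‖F u‖ ‖s u v • F v‖ :=
        norm_smul_sub_smul_le (abs_phaseCutoff_le_one F A hε.le u)
          (abs_phaseCutoff_le_one F A hε.le v) _ _
    _ ≤ (1 + 1 / ε) * ‖F u - s u v • F v‖ := by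
        rw [norm_smul, hs, one_mul, add_mul, one_mul, one_div_mul_eq_div]
        gcongr
        exact abs_phaseCutoff_sub_mul_min_le F A hε u v hs

theorem stmt_17 {V : Type*} [Fintype V] {n : ℕ} (G : SimpleGraph V) [DecidableRel G.Adj]
    (s : V → V → ℂ) (hs_unit : ∀ u v, G.Adj u v → ‖s u v‖ = 1)
    (F : V → EuclideanSpace ℂ (Fin n))
    (dF : V → V → ℝ)
    (hdF : ∀ u v, dF u v = sInf { x : ℝ | ∃ γ : ℂ, ‖γ‖ = 1 ∧
      x = ‖(‖F u‖ : ℂ)⁻¹ • F u - γ • ((‖F v‖ : ℂ)⁻¹ • F v)‖ })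
    (S : Set V) (ε : ℝ) (hε : 0 < ε)
    (η : V → ℝ)
    (hη : ∀ u, η u = if F u = 0 then 0 else
      max 0 (1 - sInf { x : ℝ | ∃ a, a ∈ S ∧ F a ≠ 0 ∧ x = dF u a } / ε)) :
    ∀ u v, G.Adj u v →
      ‖(η u : ℂ) • F u - s u v • ((η v : ℂ) • F v)‖ ≤
        (1 + 1 / ε) * ‖F u - s u v • F v‖ :=
  stmt_17_general G s hs_unit F dF hdF S ε hε η hη
end
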